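/- arXiv:1403.6484 — 3 statements merged into one kernel-verified Lean document; each statement's English description precedes it below -/
import Mathlib

section
/- Fix k ≥ 1 and α ∈ (-1/2, 0) ∪ (0, 1/2), and let h(x) = Σ_{j=0}^k (-1)^j C(k,j) (x-j)₊^α. Then h ∈ L²(ℝ), i.e. ∫_ℝ h(x)² dx < ∞. -/
/-!
For `x > k` the sum is the `k`-th forward difference of `y ↦ y ^ α` at `x - k`. Each forward
difference costs, by the mean value theorem, one derivative, so it decays like `x ^ (α - k)`,
which is square-integrable at infinity as soon as `α < k - 1/2`. Near the finitely many
singular points every term `(x - j)₊ ^ α` is square-integrable since `2α > -1`.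
-/

open MeasureTheory Set Function

/-- The paper's `(x)₊ ^ β`. -/
noncomputable def truncRpow (β : ℝ) (x : ℝ) : ℝ :=
  if x ≤ 0 then 0 else x ^ β

lemma measurable_truncRpow (β : ℝ) : Measurable (truncRpow β) :=
  Measurable.ite measurableSet_Iic measurable_const (measurable_id.pow_const β)

lemma truncRpow_of_pos {β x : ℝ} (hx : 0 < x) : truncRpow β x = x ^ β :=
  if_neg hx.not_ge

lemma sq_truncRpow (β x : ℝ) : truncRpow β x ^ 2 = truncRpow (2 * β) x := by
  unfold truncRpow
  split_ifs with hx
  · simp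
  · rw [mul_comm, Real.rpow_mul (not_le.mp hx).le, Real.rpow_two]

lemma hasDerivAt_truncRpow (β : ℝ) {x : ℝ} (hx : 0 < x) :
    HasDerivAt (truncRpow β) (β * truncRpow (β - 1) x) x := by
  rw [truncRpow_of_pos hx]
  refine (Real.hasDerivAt_rpow_const (Or.inl hx.ne')).congr_of_eventuallyEq ?_
  filter_upwards [lt_mem_nhds hx] with y hy using truncRpow_of_pos hy

lemma integrableOn_truncRpow_Iic {β : ℝ} (hβ : -1 < β) (a : ℝ) :
    IntegrableOn (truncRpow β) (Iic a) := by
  have hind : truncRpow β = (Ioi 0).indicator fun x ↦ x ^ β := by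
    ext x
    by_cases hx : 0 < x
    · simp [truncRpow_of_pos hx, hx]
    · simp [truncRpow, not_lt.mp hx, hx]
  rw [hind, IntegrableOn, integrable_indicator_iff measurableSet_Ioi, IntegrableOn,
    Measure.restrict_restrict measurableSet_Ioi, Ioi_inter_Iic]
  exact ((intervalIntegral.intervalIntegrable_rpow' hβ).def'.mono_set Ioc_subset_uIoc)

lemma memLp_truncRpow_restrict_Iic {β : ℝ} (hβ : -(1 / 2) < β) (a : ℝ) :
    MemLp (truncRpow β) 2 (volume.restrict (Iic a)) := by
  rw [memLp_two_iff_integrable_sq (measurable_truncRpow β).aestronglyMeasurable]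
  simp_rw [sq_truncRpow]
  exact integrableOn_truncRpow_Iic (by linarith) a

section fwdDiff

variable {E : Type*} [NormedAddCommGroup E]

lemma memLp_fwdDiff_iter_restrict_Iic {f : ℝ → E} {p : ENNReal}
    (hf : ∀ a, MemLp f p (volume.restrict (Iic a))) (h : ℝ) (n : ℕ) (a : ℝ) :
    MemLp ((fwdDiff h)^[n] f) p (volume.restrict (Iic a)) := by
  induction n generalizing f with
  | zero => exact hf a
  | succ n ih =>
    rw [iterate_succ_apply]
    refine ih fun b ↦ MemLp.sub ?_ (hf b)
    have hpres := (measurePreserving_add_right volume h).restrict_preimage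
      (measurableSet_Iic (a := b + h))
    rw [preimage_add_const_Iic, add_sub_cancel_right] at hpres
    exact (hf (b + h)).comp_measurePreserving hpres

lemma hasDerivAt_fwdDiff_iter [NormedSpace ℝ E] {f f' : ℝ → E} {a h : ℝ} (hh : 0 ≤ h)
    (hf : ∀ x, a < x → HasDerivAt f (f' x) x) (n : ℕ) {x : ℝ} (hx : a < x) :
    HasDerivAt ((fwdDiff h)^[n] f) ((fwdDiff h)^[n] f' x) x := by
  induction n generalizing f f' with
  | zero => exact hf x hx
  | succ n ih =>
    rw [iterate_succ_apply, iterate_succ_apply]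
    refine ih (fun y hy ↦ ?_)
    exact (hf (y + h) (by linarith)).comp_add_const.sub (hf y hy)

end fwdDiff

lemma sum_choose_mul_sub_eq_fwdDiff_iter (f : ℝ → ℝ) (k : ℕ) (x : ℝ) :
    ∑ j ∈ Finset.range (k + 1), (-1 : ℝ) ^ j * (k.choose j : ℝ) * f (x - j) =
      (fwdDiff 1)^[k] f (x - k) := by
  rw [fwdDiff_iter_eq_sum_shift, ← Finset.sum_range_reflect]
  refine Finset.sum_congr rfl fun j hj ↦ ?_
  have hjk : j ≤ k := Nat.lt_succ_iff.mp (Finset.mem_range.mp hj)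
  rw [add_tsub_cancel_right, Nat.choose_symm hjk, Nat.cast_sub hjk, zsmul_eq_mul, nsmul_eq_mul]
  push_cast
  ring_nf

lemma abs_fwdDiff_iter_truncRpow_le {β : ℝ} {n : ℕ} (hβ : β < n) :
    ∃ C, 0 ≤ C ∧ ∀ y, 0 < y → |(fwdDiff 1)^[n] (truncRpow β) y| ≤ C * y ^ (β - n) := by
  induction n generalizing β with
  | zero =>
    exact ⟨1, zero_le_one, fun y hy ↦ by
      simp [truncRpow_of_pos hy, abs_of_pos (Real.rpow_pos_of_pos hy β)]⟩
  | succ n ih =>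
    obtain ⟨C, hC0, hC⟩ := ih (β := β - 1) (by push_cast at hβ; linarith)
    refine ⟨|β| * C, by positivity, fun y hy ↦ ?_⟩
    have hderiv : ∀ x, 0 < x → HasDerivAt ((fwdDiff 1)^[n] (truncRpow β))
        (β * (fwdDiff 1)^[n] (truncRpow (β - 1)) x) x := fun x hx ↦ by
      have := hasDerivAt_fwdDiff_iter (f' := β • truncRpow (β - 1)) zero_le_one
        (fun x hx ↦ hasDerivAt_truncRpow β hx) n hx
      rwa [fwdDiff_iter_const_smul, Pi.smul_apply, smul_eq_mul] at this
    obtain ⟨c, ⟨hyc, -⟩, hc⟩ := exists_hasDerivAt_eq_slope _ _ (lt_add_one y)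
      (fun x hx ↦ (hderiv x (hy.trans_le hx.1)).continuousAt.continuousWithinAt)
      (fun x hx ↦ hderiv x (hy.trans hx.1))
    rw [add_sub_cancel_left, div_one] at hc
    have hmono : c ^ (β - 1 - n) ≤ y ^ (β - 1 - n) :=
      Real.rpow_le_rpow_of_nonpos hy hyc.le (by push_cast at hβ; linarith)
    calc |(fwdDiff 1)^[n + 1] (truncRpow β) y|
        = |β| * |(fwdDiff 1)^[n] (truncRpow (β - 1)) c| := by
          rw [iterate_succ_apply', fwdDiff, ← hc, abs_mul]
      _ ≤ |β| * (C * y ^ (β - 1 - n)) := by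
          gcongr
          exact (hC c (hy.trans hyc)).trans (mul_le_mul_of_nonneg_left hmono hC0)
      _ = |β| * C * y ^ (β - ↑(n + 1)) := by push_cast; ring_nf

theorem integrable_sq_fwdDiff_iter_truncRpow {β : ℝ} {n : ℕ} (hβ₁ : -(1 / 2) < β)
    (hβ₂ : β < n - 1 / 2) :
    Integrable (fun y ↦ ((fwdDiff 1)^[n] (truncRpow β) y) ^ 2) := by
  obtain ⟨C, -, hC⟩ := abs_fwdDiff_iter_truncRpow_le (n := n) (by linarith)
  have hIic : IntegrableOn (fun y ↦ ((fwdDiff 1)^[n] (truncRpow β) y) ^ 2) (Iic 1) :=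
    (memLp_fwdDiff_iter_restrict_Iic (memLp_truncRpow_restrict_Iic hβ₁) 1 n 1).integrable_sq
  have hcont : ContinuousOn (fun y ↦ ((fwdDiff 1)^[n] (truncRpow β) y) ^ 2) (Ioi 0) :=
    fun y hy ↦ ((hasDerivAt_fwdDiff_iter zero_le_one
      (fun x hx ↦ hasDerivAt_truncRpow β hx) n hy).continuousAt.pow 2).continuousWithinAt
  have hIoi : IntegrableOn (fun y ↦ ((fwdDiff 1)^[n] (truncRpow β) y) ^ 2) (Ioi 1) := by
    refine Integrable.mono' ((integrableOn_Ioi_rpow_of_lt (a := 2 * (β - n)) (by linarith)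
      one_pos).const_mul (C ^ 2)) ((hcont.mono (Ioi_subset_Ioi zero_le_one)).aestronglyMeasurable
      measurableSet_Ioi) ?_
    filter_upwards [ae_restrict_mem measurableSet_Ioi] with y hy
    have hy0 : 0 < y := zero_lt_one.trans hy
    rw [Real.norm_eq_abs, abs_sq, mul_comm 2, Real.rpow_mul hy0.le, Real.rpow_two, ← mul_pow,
      ← sq_abs]
    exact pow_le_pow_left₀ (abs_nonneg _) (hC y hy0) 2
  simpa [Iic_union_Ioi] using hIic.union hIoi

theorem stmt_4 (k : ℕ) (hk : 1 ≤ k) (α : ℝ)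
    (hα : α ∈ Set.Ioo (-(1/2) : ℝ) 0 ∪ Set.Ioo (0:ℝ) (1/2)) :
    Integrable (fun x : ℝ =>
      (∑ j ∈ Finset.range (k+1), (-1:ℝ)^j * (Nat.choose k j : ℝ) *
          (if x - (j:ℝ) ≤ 0 then 0 else (x - (j:ℝ)) ^ α)) ^ 2) volume := by
  have hα₁ : -(1 / 2) < α := by rcases hα with h | h <;> linarith [h.1]
  have hα₂ : α < 1 / 2 := by rcases hα with h | h <;> linarith [h.2]
  have hk' : (1 : ℝ) ≤ k := by exact_mod_cast hk
  have key := (integrable_sq_fwdDiff_iter_truncRpow (n := k) hα₁ (by linarith)).comp_sub_right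
    (k : ℝ)
  convert key using 3 with x
  exact sum_choose_mul_sub_eq_fwdDiff_iter (truncRpow α) k x
end

section
/- Let α ∈ (-1/2,0) ∪ (0,1/2), δ > 0, and let f̃ ∈ C²(ℝ) with support in (-δ, δ) and f̃(0) ≠ 0, and define g̃(x) = f̃(x)|x|^α (with g̃(0)=0). Define R̃(u) = ∫_{-δ}^{δ} (g̃(-s) - g̃(-u-s))² ds for u > 0. Then R̃(u) = u^{2α+1} Z(u) where Z(u) = ∫_0^1 x^{2α} f̃(ux)² dx + ∫_1^{δ/u} (x^α f̃(ux) - (x-1)^α f̃(ux-u))² dx, and lim_{u→0⁺} Z(u) = f̃(0)² ( ∫_0^1 x^{2α} dx + ∫_1^∞ (x^α - (x-1)^α)² dx ), which is finite and strictly positive. -/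
open MeasureTheory Filter intervalIntegral Set Topology
open scoped NNReal

/-!
Substituting `s = -u x` turns `R̃(u)` into `u ∫ (g̃(ux) - g̃(ux - u))² dx`, and for `x > 0` we
have `g̃(ux) = u^α x^α f̃(ux)`; this gives the scaling identity.

The limit of `Z` follows from dominated convergence in both integrals. On `(0, 1]` the integrand
is at most `sup |f̃|² x^{2α}`. On `(1, δ/u]` write
`x^α f̃(ux) - (x-1)^α f̃(ux-u) = (x^α - (x-1)^α) f̃(ux) + (x-1)^α (f̃(ux) - f̃(ux-u))`.
The first term is dominated by `sup |f̃|² (x^α - (x-1)^α)²`, which is integrable on `(1, ∞)`: both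
powers are square integrable near `1` as `2α > -1`, and by the mean value theorem it is
`O(x^{2α-2})` at infinity as `α < 1/2`. Since `f̃` is `K`-Lipschitz and `u ≤ δ/x`, the second term
is dominated by `K² δ² (x-1)^{2α} / x²`.
-/

lemma sq_rpow_eq_rpow_two_mul {y : ℝ} (hy : 0 ≤ y) (α : ℝ) : (y ^ α) ^ 2 = y ^ (2 * α) := by
  rw [← Real.rpow_mul_natCast hy]; push_cast; ring_nf

lemma abs_rpow_sub_rpow_sub_one_le {α x : ℝ} (hα : α ≤ 1) (hx : 1 < x) :
    |x ^ α - (x - 1) ^ α| ≤ |α| * (x - 1) ^ (α - 1) := by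
  obtain ⟨c, hc, hslope⟩ := exists_hasDerivAt_eq_slope (fun t => t ^ α)
    (fun t => α * t ^ (α - 1)) (sub_one_lt x)
    (fun t ht =>
      (Real.continuousAt_rpow_const t α (Or.inl (by linarith [ht.1]))).continuousWithinAt)
    (fun t ht => Real.hasDerivAt_rpow_const (Or.inl (by linarith [ht.1])))
  have hc0 : 0 < c := by linarith [hc.1]
  have hdiff : x ^ α - (x - 1) ^ α = α * c ^ (α - 1) := by
    rw [hslope]; field_simp; ring
  rw [hdiff, abs_mul, abs_of_pos (Real.rpow_pos_of_pos hc0 _)]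
  exact mul_le_mul_of_nonneg_left
    (Real.rpow_le_rpow_of_nonpos (sub_pos.2 hx) hc.1.le (sub_nonpos.2 hα)) (abs_nonneg α)

lemma sq_mul_sub_mul_le {a b p q M E : ℝ} (hp : |p| ≤ M) (hpq : |p - q| ≤ E) :
    (a * p - b * q) ^ 2 ≤ 2 * M ^ 2 * (a - b) ^ 2 + 2 * b ^ 2 * E ^ 2 := by
  have hp2 : p ^ 2 ≤ M ^ 2 := sq_le_sq.2 (hp.trans (le_abs_self M))
  have hpq2 : (p - q) ^ 2 ≤ E ^ 2 := sq_le_sq.2 (hpq.trans (le_abs_self E))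
  nlinarith [sq_nonneg ((a - b) * p - b * (p - q)),
    mul_le_mul_of_nonneg_left hp2 (sq_nonneg (a - b)), mul_le_mul_of_nonneg_left hpq2 (sq_nonneg b)]

lemma intervalIntegrable_rpow_sub {β : ℝ} (hβ : -1 < β) (a b : ℝ) :
    IntervalIntegrable (fun x => (x - a) ^ β) volume a b := by
  simpa using (intervalIntegrable_rpow' hβ (a := 0) (b := b - a)).comp_sub_right a

lemma integrableOn_Ioi_rpow_sub {γ : ℝ} (hγ : γ < -1) {a b : ℝ} (hab : a < b) :
    IntegrableOn (fun x => (x - a) ^ γ) (Ioi b) := by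
  have := integrableOn_Ioi_rpow_of_lt hγ (sub_pos.2 hab)
  rw [← (measurePreserving_sub_right volume a).integrableOn_comp_preimage
    (measurableEmbedding_subRight a)] at this
  simpa [Function.comp_def] using this

lemma integrableOn_sq_sub {s : Set ℝ} {a b : ℝ → ℝ}
    (ha : AEStronglyMeasurable a (volume.restrict s))
    (hb : AEStronglyMeasurable b (volume.restrict s))
    (ha2 : IntegrableOn (fun x => a x ^ 2) s) (hb2 : IntegrableOn (fun x => b x ^ 2) s) :
    IntegrableOn (fun x => (a x - b x) ^ 2) s :=
  (((memLp_two_iff_integrable_sq ha).2 ha2).sub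
    ((memLp_two_iff_integrable_sq hb).2 hb2)).integrable_sq

lemma intervalIntegrable_sq_rpow_mul_sub_rpow_sub_one_mul {α : ℝ} (hα : -1 < 2 * α)
    {p q : ℝ → ℝ} (hp : Continuous p) (hq : Continuous q) {c : ℝ} (hc : 1 ≤ c) :
    IntervalIntegrable (fun x => (x ^ α * p x - (x - 1) ^ α * q x) ^ 2) volume 1 c := by
  rw [intervalIntegrable_iff_integrableOn_Ioc_of_le hc]
  refine integrableOn_sq_sub
    (by fun_prop : Measurable fun x : ℝ => x ^ α * p x).aestronglyMeasurable
    (by fun_prop : Measurable fun x : ℝ => (x - 1) ^ α * q x).aestronglyMeasurable ?_ ?_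
  · refine (ContinuousOn.integrableOn_Icc fun x hx => ?_).mono_set Ioc_subset_Icc_self
    exact (((Real.continuousAt_rpow_const x α (Or.inl (by linarith [hx.1]))).mul
      hp.continuousAt).pow 2).continuousWithinAt
  · have h := ((intervalIntegrable_rpow_sub hα 1 c).mul_continuousOn
      (hq.pow 2).continuousOn).1
    refine h.congr_fun (fun x hx => ?_) measurableSet_Ioc
    show (x - 1) ^ (2 * α) * q x ^ 2 = ((x - 1) ^ α * q x) ^ 2
    rw [mul_pow, sq_rpow_eq_rpow_two_mul (by linarith [hx.1])]

lemma integrableOn_Ioi_sq_rpow_sub_rpow_sub_one {α : ℝ} (hα₁ : -(1 / 2) < α) (hα₂ : α < 1 / 2) :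
    IntegrableOn (fun x : ℝ => (x ^ α - (x - 1) ^ α) ^ 2) (Ioi 1) := by
  rw [← Ioc_union_Ioi_eq_Ioi one_le_two]
  refine IntegrableOn.union ?_ ?_
  · simpa using (intervalIntegrable_sq_rpow_mul_sub_rpow_sub_one_mul (α := α) (by linarith)
      (p := fun _ => 1) (q := fun _ => 1) continuous_const continuous_const one_le_two).1
  · refine Integrable.mono' ((integrableOn_Ioi_rpow_sub (by linarith : 2 * (α - 1) < -1)
      one_lt_two).const_mul (α ^ 2))
      (by fun_prop : Measurable fun x : ℝ => (x ^ α - (x - 1) ^ α) ^ 2).aestronglyMeasurable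
      (ae_restrict_of_forall_mem measurableSet_Ioi fun x hx => ?_)
    have hx1 : (1 : ℝ) < x := one_lt_two.trans hx
    calc ‖(x ^ α - (x - 1) ^ α) ^ 2‖ = |x ^ α - (x - 1) ^ α| ^ 2 := by simp
      _ ≤ (|α| * (x - 1) ^ (α - 1)) ^ 2 := by
        gcongr; exact abs_rpow_sub_rpow_sub_one_le (by linarith) hx1
      _ = α ^ 2 * (x - 1) ^ (2 * (α - 1)) := by
        rw [mul_pow, sq_abs, sq_rpow_eq_rpow_two_mul (by linarith)]

lemma integrableOn_Ioi_rpow_sub_one_div_sq {β : ℝ} (hβ₁ : -1 < β) (hβ₂ : β < 1) :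
    IntegrableOn (fun x : ℝ => (x - 1) ^ β / x ^ 2) (Ioi 1) := by
  have hmeas : ∀ s, AEStronglyMeasurable (fun x : ℝ => (x - 1) ^ β / x ^ 2)
      (volume.restrict s) :=
    fun s => (by fun_prop : Measurable fun x : ℝ => (x - 1) ^ β / x ^ 2).aestronglyMeasurable
  rw [← Ioc_union_Ioi_eq_Ioi one_le_two]
  refine IntegrableOn.union ?_ ?_
  · refine Integrable.mono' ((intervalIntegrable_rpow_sub hβ₁ 1 2).1) (hmeas _)
      (ae_restrict_of_forall_mem measurableSet_Ioc fun x hx => ?_)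
    have hx0 : 0 ≤ (x - 1) ^ β := Real.rpow_nonneg (by linarith [hx.1]) _
    rw [Real.norm_of_nonneg (div_nonneg hx0 (sq_nonneg x))]
    exact div_le_self hx0 (one_le_pow₀ hx.1.le)
  · refine Integrable.mono' (integrableOn_Ioi_rpow_sub (by linarith : β - 2 < -1) one_lt_two)
      (hmeas _) (ae_restrict_of_forall_mem measurableSet_Ioi fun x hx => ?_)
    have hx1 : 0 < x - 1 := by linarith [show (2 : ℝ) < x from hx]
    rw [Real.norm_of_nonneg (by positivity), show β - 2 = β - (2 : ℕ) by norm_num,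
      Real.rpow_sub_natCast hx1.ne']
    gcongr
    linarith

theorem integral_sq_sub_eq_rpow_mul {f g : ℝ → ℝ} {α δ u : ℝ} (hα : -1 < 2 * α)
    (hf : Continuous f) (hg_nonpos : ∀ x ≤ 0, g x = 0) (hg_pos : ∀ x, 0 < x → g x = f x * x ^ α)
    (hu : 0 < u) (huδ : u ≤ δ) :
    ∫ s in (-δ)..δ, (g (-s) - g (-u - s)) ^ 2 =
      u ^ (2 * α + 1) * ((∫ x in (0 : ℝ)..1, x ^ (2 * α) * f (u * x) ^ 2) +
        ∫ x in (1 : ℝ)..(δ / u), (x ^ α * f (u * x) - (x - 1) ^ α * f (u * x - u)) ^ 2) := by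
  set c := δ / u
  have hc : 1 ≤ c := (one_le_div hu).2 huδ
  set φ : ℝ → ℝ := fun x => (g (u * x) - g (u * x - u)) ^ 2
  have hsubst : ∫ s in (-δ)..δ, (g (-s) - g (-u - s)) ^ 2 = u * ∫ x in (-c)..c, φ x := by
    have h := integral_comp_mul_left (a := -c) (b := c) (fun t => (g t - g (t - u)) ^ 2) hu.ne'
    rw [mul_neg, mul_div_cancel₀ δ hu.ne'] at h
    rw [h, smul_eq_mul, mul_inv_cancel_left₀ hu.ne', ← neg_neg δ, ← integral_comp_neg, neg_neg]
    simp only [neg_neg, sub_neg_eq_add, neg_add_eq_sub]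
  have hneg : EqOn φ 0 (uIoc (-c) 0) := fun x hx => by
    rw [uIoc_of_le (by linarith)] at hx
    have hux : u * x ≤ 0 := mul_nonpos_of_nonneg_of_nonpos hu.le hx.2
    simp [φ, hg_nonpos _ hux, hg_nonpos (u * x - u) (by linarith)]
  have hmid : EqOn φ (fun x => u ^ (2 * α) * (x ^ (2 * α) * f (u * x) ^ 2)) (uIoc 0 1) :=
      fun x hx => by
    rw [uIoc_of_le zero_le_one] at hx
    have hux : u * x - u ≤ 0 := by nlinarith [hx.2]
    simp only [φ, hg_pos _ (mul_pos hu hx.1), hg_nonpos _ hux, Real.mul_rpow hu.le hx.1.le,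
      ← sq_rpow_eq_rpow_two_mul hu.le, ← sq_rpow_eq_rpow_two_mul hx.1.le]
    ring
  have hright : EqOn φ (fun x => u ^ (2 * α) *
      (x ^ α * f (u * x) - (x - 1) ^ α * f (u * x - u)) ^ 2) (uIoc 1 c) := fun x hx => by
    rw [uIoc_of_le hc] at hx
    have hux : u * x - u = u * (x - 1) := by ring
    have hx0 : 0 < x - 1 := by linarith [hx.1]
    simp only [φ, hg_pos _ (mul_pos hu (by linarith : (0 : ℝ) < x)), hux,
      hg_pos _ (mul_pos hu hx0),
      Real.mul_rpow hu.le (by linarith : (0 : ℝ) ≤ x), Real.mul_rpow hu.le hx0.le,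
      ← sq_rpow_eq_rpow_two_mul hu.le]
    ring
  have hI₁ : IntervalIntegrable (fun x => x ^ (2 * α) * f (u * x) ^ 2) volume 0 1 :=
    (intervalIntegrable_rpow' hα).mul_continuousOn (by fun_prop)
  have hI₂ := intervalIntegrable_sq_rpow_mul_sub_rpow_sub_one_mul hα (p := fun x => f (u * x))
    (q := fun x => f (u * x - u)) (by fun_prop) (by fun_prop) hc
  have hφ₁ : IntervalIntegrable φ volume (-c) 0 := intervalIntegrable_const.congr hneg.symm
  have hφ₂ : IntervalIntegrable φ volume 0 1 := (hI₁.const_mul _).congr hmid.symm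
  have hφ₃ : IntervalIntegrable φ volume 1 c := (hI₂.const_mul _).congr hright.symm
  rw [hsubst, ← integral_add_adjacent_intervals (hφ₁.trans hφ₂) hφ₃,
    ← integral_add_adjacent_intervals hφ₁ hφ₂, integral_congr_ae (ae_of_all _ hneg),
    integral_congr_ae (ae_of_all _ hmid), integral_congr_ae (ae_of_all _ hright),
    Real.rpow_add hu, Real.rpow_one]
  simp only [Pi.zero_apply, intervalIntegral.integral_zero, intervalIntegral.integral_const_mul]
  ring

lemma tendsto_intervalIntegral_mul_comp_mul {w F : ℝ → ℝ} (hw : IntervalIntegrable w volume 0 1)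
    (hF : Continuous F) :
    Tendsto (fun u => ∫ x in (0 : ℝ)..1, w x * F (u * x)) (𝓝 0)
      (𝓝 ((∫ x in (0 : ℝ)..1, w x) * F 0)) := by
  obtain ⟨C, hC⟩ :=
    isCompact_Icc.exists_bound_of_continuousOn (s := Icc (-1 : ℝ) 1) hF.continuousOn
  rw [← intervalIntegral.integral_mul_const]
  refine tendsto_integral_filter_of_dominated_convergence (fun x => ‖w x‖ * C)
    (Eventually.of_forall fun u => hw.def'.aestronglyMeasurable.mul
      (by fun_prop : Continuous fun x => F (u * x)).aestronglyMeasurable)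
    ?_ (hw.norm.mul_const C) (ae_of_all _ fun x _ => ?_)
  · filter_upwards [Icc_mem_nhds (by norm_num : (-1 : ℝ) < 0) one_pos] with u hu
    refine ae_of_all _ fun x hx => ?_
    rw [uIoc_of_le zero_le_one] at hx
    have hux : |u * x| ≤ 1 := by
      rw [abs_mul]
      exact mul_le_one₀ (abs_le.2 hu) (abs_nonneg x) (abs_le.2 ⟨by linarith [hx.1], hx.2⟩)
    rw [norm_mul]
    exact mul_le_mul_of_nonneg_left (hC _ (abs_le.1 hux)) (norm_nonneg _)
  · exact ((by fun_prop : Continuous fun u => F (u * x)).tendsto' 0 _ (by simp)).const_mul (w x)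

lemma tendsto_intervalIntegral_of_dominated_of_tendsto_atTop {ι : Type*} {l : Filter ι}
    [l.IsCountablyGenerated] {F : ι → ℝ → ℝ} {f bound : ℝ → ℝ} {a : ℝ} {b : ι → ℝ}
    (hb : Tendsto b l atTop)
    (hF_meas : ∀ᶠ i in l, AEStronglyMeasurable (F i) (volume.restrict (Ioi a)))
    (h_bound : ∀ᶠ i in l, ∀ x ∈ Ioc a (b i), ‖F i x‖ ≤ bound x)
    (bound_integrable : IntegrableOn bound (Ioi a))
    (h_lim : ∀ x ∈ Ioi a, Tendsto (fun i => F i x) l (𝓝 (f x))) :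
    Tendsto (fun i => ∫ x in a..b i, F i x) l (𝓝 (∫ x in Ioi a, f x)) := by
  have heq : (fun i => ∫ x in Ioi a, (Ioc a (b i)).indicator (F i) x) =ᶠ[l]
      fun i => ∫ x in a..b i, F i x := by
    filter_upwards [hb.eventually_ge_atTop a] with i hi
    rw [integral_of_le hi, setIntegral_indicator measurableSet_Ioc,
      inter_eq_self_of_subset_right Ioc_subset_Ioi_self]
  refine (tendsto_integral_filter_of_dominated_convergence (fun x => ‖bound x‖) ?_ ?_
    bound_integrable.norm ?_).congr' heq
  · filter_upwards [hF_meas] with i hi using hi.indicator measurableSet_Ioc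
  · filter_upwards [h_bound] with i hi
    refine ae_of_all _ fun x => ?_
    by_cases hx : x ∈ Ioc a (b i)
    · rw [indicator_of_mem hx]
      exact (hi x hx).trans (Real.le_norm_self _)
    · rw [indicator_of_notMem hx, norm_zero]
      exact norm_nonneg _
  · refine ae_restrict_of_forall_mem measurableSet_Ioi fun x hx => (h_lim x hx).congr' ?_
    filter_upwards [hb.eventually_ge_atTop x] with i hi
    exact (indicator_of_mem (show x ∈ Ioc a (b i) from ⟨hx, hi⟩) _).symm

theorem tendsto_intervalIntegral_sq_rpow_mul_sub_rpow_sub_one_mul {α δ M : ℝ} {K : ℝ≥0}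
    {f : ℝ → ℝ} (hα₁ : -(1 / 2) < α) (hα₂ : α < 1 / 2) (hδ : 0 < δ) (hM : ∀ x, |f x| ≤ M)
    (hK : LipschitzWith K f) :
    Tendsto (fun u =>
        ∫ x in (1 : ℝ)..(δ / u), (x ^ α * f (u * x) - (x - 1) ^ α * f (u * x - u)) ^ 2) (𝓝[>] 0)
      (𝓝 (f 0 ^ 2 * ∫ x in Ioi (1 : ℝ), (x ^ α - (x - 1) ^ α) ^ 2)) := by
  have hf := hK.continuous
  have hb : Tendsto (fun u : ℝ => δ / u) (𝓝[>] 0) atTop := by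
    simpa only [div_eq_mul_inv] using tendsto_inv_nhdsGT_zero.const_mul_atTop hδ
  rw [← MeasureTheory.integral_const_mul]
  refine tendsto_intervalIntegral_of_dominated_of_tendsto_atTop
    (bound := fun x => 2 * M ^ 2 * (x ^ α - (x - 1) ^ α) ^ 2 +
      2 * (K * δ) ^ 2 * ((x - 1) ^ (2 * α) / x ^ 2))
    hb (Eventually.of_forall fun u => (by fun_prop : Measurable fun x : ℝ =>
      (x ^ α * f (u * x) - (x - 1) ^ α * f (u * x - u)) ^ 2).aestronglyMeasurable) ?_
    (((integrableOn_Ioi_sq_rpow_sub_rpow_sub_one hα₁ hα₂).const_mul (2 * M ^ 2)).fun_add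
      ((integrableOn_Ioi_rpow_sub_one_div_sq (β := 2 * α) (by linarith) (by linarith)).const_mul
        (2 * (K * δ) ^ 2))) fun x _ => ?_
  · filter_upwards [self_mem_nhdsWithin] with u (hu : 0 < u) x ⟨hx₁, hxu⟩
    have hx₀ : 0 < x := by linarith
    have hlip : |f (u * x) - f (u * x - u)| ≤ K * δ / x := by
      have h := hK.dist_le_mul (u * x) (u * x - u)
      rw [Real.dist_eq, Real.dist_eq, sub_sub_cancel, abs_of_pos hu] at h
      rw [le_div_iff₀ hx₀]
      have hux : x * u ≤ δ := (le_div_iff₀ hu).1 hxu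
      nlinarith [K.coe_nonneg]
    rw [Real.norm_of_nonneg (sq_nonneg _)]
    refine (sq_mul_sub_mul_le (hM _) hlip).trans_eq ?_
    rw [sq_rpow_eq_rpow_two_mul (by linarith), div_pow]
    ring
  · exact tendsto_nhdsWithin_of_tendsto_nhds ((by fun_prop : Continuous fun u : ℝ =>
      (x ^ α * f (u * x) - (x - 1) ^ α * f (u * x - u)) ^ 2).tendsto' 0 _ (by simp; ring))

theorem stmt_11 (α : ℝ) (hα : α ∈ Set.Ioo (-(1/2) : ℝ) 0 ∪ Set.Ioo (0:ℝ) (1/2))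
    (δ : ℝ) (hδ : 0 < δ) (f : ℝ → ℝ) (hf : ContDiff ℝ 2 f)
    (hsupp : ∀ x, x ∉ Set.Ioo (-δ) δ → f x = 0) (hf0 : f 0 ≠ 0) :
    let g : ℝ → ℝ := fun x => if x ≤ 0 then 0 else f x * |x| ^ α
    let R : ℝ → ℝ := fun u => ∫ s in (-δ)..δ, (g (-s) - g (-u - s)) ^ 2
    let Z : ℝ → ℝ := fun u =>
      (∫ x in (0:ℝ)..1, x ^ (2*α) * f (u * x) ^ 2) +
        ∫ x in (1:ℝ)..(δ/u), (x ^ α * f (u * x) - (x - 1) ^ α * f (u * x - u)) ^ 2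
    let L : ℝ := f 0 ^ 2 * ((∫ x in (0:ℝ)..1, x ^ (2*α)) +
        ∫ x in Set.Ioi (1:ℝ), (x ^ α - (x - 1) ^ α) ^ 2)
    (∀ u : ℝ, 0 < u → u < δ → R u = u ^ (2*α + 1) * Z u) ∧
    Tendsto Z (nhdsWithin 0 (Set.Ioi 0)) (nhds L) ∧
    IntegrableOn (fun x : ℝ => (x ^ α - (x - 1) ^ α) ^ 2) (Set.Ioi 1) ∧
    0 < L := by
  intro g R Z L
  obtain ⟨hα₁, hα₂⟩ : -(1 / 2) < α ∧ α < 1 / 2 := by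
    rcases hα with h | h <;> exact ⟨by linarith [h.1], by linarith [h.2]⟩
  have hfc : Continuous f := hf.continuous
  have hcs : HasCompactSupport f :=
    HasCompactSupport.intro isCompact_Icc fun x hx => hsupp x fun h => hx (Ioo_subset_Icc_self h)
  obtain ⟨M, hM⟩ := hcs.exists_bound_of_continuous hfc
  obtain ⟨K, hK⟩ := hf.lipschitzWith_of_hasCompactSupport hcs two_ne_zero
  have h2α : -1 < 2 * α := by linarith
  refine ⟨fun u hu huδ => ?_, ?_, integrableOn_Ioi_sq_rpow_sub_rpow_sub_one hα₁ hα₂, ?_⟩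
  · exact integral_sq_sub_eq_rpow_mul h2α hfc (fun x hx => if_pos hx)
      (fun x hx => by simp [g, hx.not_ge, abs_of_pos hx]) hu huδ.le
  · have hL : L = (∫ x in (0 : ℝ)..1, x ^ (2 * α)) * f 0 ^ 2 +
        f 0 ^ 2 * ∫ x in Ioi (1 : ℝ), (x ^ α - (x - 1) ^ α) ^ 2 := by
      simp only [L]; ring
    rw [hL]
    exact ((tendsto_intervalIntegral_mul_comp_mul (F := fun y => f y ^ 2)
      (intervalIntegrable_rpow' h2α) (hfc.pow 2)).mono_left nhdsWithin_le_nhds).add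
      (tendsto_intervalIntegral_sq_rpow_mul_sub_rpow_sub_one_mul hα₁ hα₂ hδ
        (fun x => by simpa using hM x) hK)
  · have hI₁ : 0 < ∫ x in (0 : ℝ)..1, x ^ (2 * α) :=
      intervalIntegral_pos_of_pos_on (intervalIntegrable_rpow' h2α)
        (fun x hx => Real.rpow_pos_of_pos hx.1 _) one_pos
    have hI₂ : 0 ≤ ∫ x in Ioi (1 : ℝ), (x ^ α - (x - 1) ^ α) ^ 2 :=
      setIntegral_nonneg measurableSet_Ioi fun x _ => sq_nonneg _
    exact mul_pos (by positivity) (by linarith)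
end

section
/- Let θ₁ > θ₂ ≥ 0 and t = θ₁ - θ₂ > 0. If α < 1/4 and ε > 0 is small, then lim_{Δ→0} Δ Σ_{i=-⌊t/Δ⌋+1}^{⌊t/Δ⌋-1} |i + t/Δ|^{2(2α-1+ε)} (⌊t/Δ⌋ - |i|) = 0. -/
open Filter

theorem stmt_17 (t α ε : ℝ) (ht : 0 < t) (hα : α < 1/4) (hε : 0 < ε)
    (h1 : 0 < -4*α + 1 - 2*ε) (h2 : 2*(2*α - 1 + ε) < -1) :
    Tendsto (fun Δ : ℝ => Δ * ∑ i ∈ Finset.Icc (-⌊t/Δ⌋ + 1) (⌊t/Δ⌋ - 1),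
        |(i:ℝ) + t/Δ| ^ (2*(2*α - 1 + ε)) * ((⌊t/Δ⌋ : ℝ) - |(i:ℝ)|))
      (nhdsWithin 0 (Set.Ioi 0)) (nhds 0) := by
  set β : ℝ := 2*(2*α - 1 + ε) with hβ
  have hβ1 : β + 1 < 0 := by linarith
  -- the Cesàro averages of k^(β+1) tend to 0
  have hu : Tendsto (fun k : ℕ => (k:ℝ) ^ (β+1)) atTop (nhds 0) := by
    have := (tendsto_rpow_neg_atTop (y := -(β+1)) (by linarith)).comp
      tendsto_natCast_atTop_atTop (α := ℕ)
    simpa [Function.comp_def] using this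
  have hc : Tendsto (fun m : ℕ => (m:ℝ)⁻¹ * ∑ k ∈ Finset.range m, (k:ℝ) ^ (β+1))
      atTop (nhds 0) := hu.cesaro
  -- N(Δ) = ⌊t/Δ⌋.toNat tends to atTop
  have hNt : Tendsto (fun Δ : ℝ => 2 * (⌊t/Δ⌋).toNat) (nhdsWithin 0 (Set.Ioi 0)) atTop := by
    have h0 : Tendsto (fun Δ : ℝ => t / Δ) (nhdsWithin 0 (Set.Ioi 0)) atTop := by
      simpa [div_eq_mul_inv] using tendsto_inv_nhdsGT_zero.const_mul_atTop ht
    have h1' : Tendsto (fun Δ : ℝ => ⌊t/Δ⌋) (nhdsWithin 0 (Set.Ioi 0)) atTop :=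
      tendsto_floor_atTop.comp h0
    have h2' : Tendsto Int.toNat atTop atTop := by
      apply tendsto_atTop_atTop.2
      intro b
      exact ⟨(b:ℤ), fun a ha => by omega⟩
    exact (tendsto_atTop_atTop.2 (fun b => ⟨b, fun a ha => by omega⟩)).comp (h2'.comp h1')
  -- the upper bound function tends to 0
  have hg : Tendsto (fun Δ : ℝ => 2*t * ((((2 * (⌊t/Δ⌋).toNat : ℕ)):ℝ)⁻¹ *
      ∑ k ∈ Finset.range (2 * (⌊t/Δ⌋).toNat), (k:ℝ) ^ (β+1)))
      (nhdsWithin 0 (Set.Ioi 0)) (nhds 0) := by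
    have := (hc.comp hNt).const_mul (2*t)
    simpa using this
  apply squeeze_zero' _ _ hg
  · -- nonnegativity
    filter_upwards [self_mem_nhdsWithin] with Δ (hΔ : 0 < Δ)
    apply mul_nonneg hΔ.le
    apply Finset.sum_nonneg
    intro i hi
    simp only [Finset.mem_Icc] at hi
    apply mul_nonneg (Real.rpow_nonneg (abs_nonneg _) _)
    have : |(i:ℝ)| ≤ ((⌊t/Δ⌋ - 1 : ℤ) : ℝ) := by
      rw [abs_le]
      constructor <;> [exact_mod_cast (by omega : (-(⌊t/Δ⌋-1) : ℤ) ≤ i); exact_mod_cast hi.2]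
    push_cast at this
    linarith
  · -- the key bound
    filter_upwards [Ioo_mem_nhdsGT_of_mem (by exact ⟨le_refl (0:ℝ), ht⟩ : (0:ℝ) ∈ Set.Ico 0 t)]
      with Δ hΔ
    obtain ⟨hΔ0, hΔt⟩ := hΔ
    set N : ℤ := ⌊t/Δ⌋ with hN
    have hfloor : (N:ℝ) ≤ t/Δ := Int.floor_le _
    have hN1 : 1 ≤ N := by
      rw [hN, Int.le_floor]
      push_cast
      rw [le_div_iff₀ hΔ0]
      linarith
    -- termwise bound
    have hterm : ∀ i ∈ Finset.Icc (-N + 1) (N - 1),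
        |(i:ℝ) + t/Δ| ^ β * ((N:ℝ) - |(i:ℝ)|) ≤ (((i + N : ℤ)):ℝ) ^ (β+1) := by
      intro i hi
      simp only [Finset.mem_Icc] at hi
      have hk1 : (1:ℤ) ≤ i + N := by omega
      have hk1R : (1:ℝ) ≤ ((i+N:ℤ):ℝ) := by exact_mod_cast hk1
      have hkpos : (0:ℝ) < ((i+N:ℤ):ℝ) := by linarith
      have hbase : ((i+N:ℤ):ℝ) ≤ |(i:ℝ) + t/Δ| := by
        have : ((i+N:ℤ):ℝ) ≤ (i:ℝ) + t/Δ := by push_cast; linarith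
        exact this.trans (le_abs_self _)
      have hpow : |(i:ℝ) + t/Δ| ^ β ≤ ((i+N:ℤ):ℝ) ^ β :=
        Real.rpow_le_rpow_of_nonpos hkpos hbase (by linarith)
      have hlin : (N:ℝ) - |(i:ℝ)| ≤ ((i+N:ℤ):ℝ) := by
        have := neg_abs_le (i:ℝ)
        push_cast
        linarith
      have hlin0 : 0 ≤ (N:ℝ) - |(i:ℝ)| := by
        have : |(i:ℝ)| ≤ ((N - 1 : ℤ):ℝ) := by
          rw [abs_le]
          constructor <;> [exact_mod_cast (by omega : (-(N-1) : ℤ) ≤ i); exact_mod_cast hi.2]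
        push_cast at this
        linarith
      calc |(i:ℝ) + t/Δ| ^ β * ((N:ℝ) - |(i:ℝ)|)
          ≤ ((i+N:ℤ):ℝ) ^ β * ((i+N:ℤ):ℝ) := by
            apply mul_le_mul hpow hlin hlin0 (Real.rpow_nonneg hkpos.le _)
        _ = ((i+N:ℤ):ℝ) ^ (β+1) := (Real.rpow_add_one hkpos.ne' β).symm
    have hsum1 : ∑ i ∈ Finset.Icc (-N + 1) (N - 1),
        |(i:ℝ) + t/Δ| ^ β * ((N:ℝ) - |(i:ℝ)|)
        ≤ ∑ i ∈ Finset.Icc (-N + 1) (N - 1), (((i + N : ℤ)):ℝ) ^ (β+1) :=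
      Finset.sum_le_sum hterm
    -- reindex to ℕ
    have hsum2 : ∑ i ∈ Finset.Icc (-N + 1) (N - 1), (((i + N : ℤ)):ℝ) ^ (β+1)
        = ∑ j ∈ Finset.Icc 1 ((2*N - 1).toNat), (j:ℝ) ^ (β+1) := by
      apply Finset.sum_nbij' (fun i => (i + N).toNat) (fun j => (j:ℤ) - N)
      · intro a ha
        simp only [Finset.mem_Icc] at ha ⊢
        omega
      · intro a ha
        simp only [Finset.mem_Icc] at ha ⊢
        omega
      · intro a ha
        simp only [Finset.mem_Icc] at ha
        omega
      · intro a ha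
        simp only [Finset.mem_Icc] at ha
        omega
      · intro a ha
        simp only [Finset.mem_Icc] at ha
        congr 1
        have h0 : (0:ℤ) ≤ a + N := by omega
        exact_mod_cast (Int.toNat_of_nonneg h0).symm
    have hsum3 : ∑ j ∈ Finset.Icc 1 ((2*N - 1).toNat), (j:ℝ) ^ (β+1)
        ≤ ∑ k ∈ Finset.range (2 * N.toNat), (k:ℝ) ^ (β+1) := by
      apply Finset.sum_le_sum_of_subset_of_nonneg
      · intro j hj
        simp only [Finset.mem_Icc] at hj
        simp only [Finset.mem_range]
        omega
      · intro k _ _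
        exact Real.rpow_nonneg (Nat.cast_nonneg k) _
    -- putting it together
    set T : ℝ := ∑ k ∈ Finset.range (2 * N.toNat), (k:ℝ) ^ (β+1) with hT
    have hT0 : 0 ≤ T := Finset.sum_nonneg fun k _ => Real.rpow_nonneg (Nat.cast_nonneg k) _
    have hS : ∑ i ∈ Finset.Icc (-N + 1) (N - 1),
        |(i:ℝ) + t/Δ| ^ β * ((N:ℝ) - |(i:ℝ)|) ≤ T := by
      rw [hT]
      calc _ ≤ _ := hsum1
        _ = _ := hsum2
        _ ≤ _ := hsum3
    have hNN : ((N.toNat : ℕ):ℝ) = (N:ℝ) := by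
      exact_mod_cast congrArg (Int.cast : ℤ → ℝ) (Int.toNat_of_nonneg (by omega : (0:ℤ) ≤ N))
    have hcast : (((2 * N.toNat : ℕ)):ℝ) = 2 * (N:ℝ) := by
      push_cast
      rw [hNN]
    have hΔle : Δ * (((2 * N.toNat : ℕ)):ℝ) ≤ 2 * t := by
      rw [hcast]
      have : Δ * (N:ℝ) ≤ t := (le_div_iff₀' hΔ0).mp hfloor
      nlinarith
    have hm0 : (0:ℝ) < (((2 * N.toNat : ℕ)):ℝ) := by
      rw [hcast]
      have : (1:ℝ) ≤ (N:ℝ) := by exact_mod_cast hN1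
      linarith
    calc Δ * ∑ i ∈ Finset.Icc (-N + 1) (N - 1),
          |(i:ℝ) + t/Δ| ^ β * ((N:ℝ) - |(i:ℝ)|)
        ≤ Δ * T := by
          apply mul_le_mul_of_nonneg_left hS hΔ0.le
      _ ≤ (2*t / (((2 * N.toNat : ℕ)):ℝ)) * T := by
          apply mul_le_mul_of_nonneg_right _ hT0
          rw [le_div_iff₀ hm0]
          exact hΔle
      _ = 2*t * ((((2 * N.toNat : ℕ)):ℝ)⁻¹ * T) := by ring
end
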